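/- arXiv:1309.3896 — 4 statements merged into one kernel-verified Lean document; each statement's English description precedes it below -/
import Mathlib

section
/- Let K ⊂ ℝ² be the attractor of a rotation- and reflection-free iterated function system {ψ_1,…,ψ_q}, ψ_j(x) = ρ_j x + w_j, satisfying the strong separation condition. If for almost every t ∈ π(K) every cylinder set ψ_{ω₁}∘⋯∘ψ_{ω_m}(K) containing a point of π⁻¹{t} has slice of infinite (s−1)-dimensional packing premeasure (i.e. P^{s−1}((ψ_ω(K))_t) = ∞ for all relevant finite words ω), then 𝒫^{s−1}(K_t) = ∞ for almost every t ∈ π(K). In particular, if P^{s−1}(K_t) = ∞ for a.e. t ∈ π(K), then by self-similarity 𝒫^{s−1}(K_t) = ∞ for a.e. t ∈ π(K). -/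
/-!
Suppose `𝒫^{s-1}(K_t) < ∞`. Covering the compact slice `K_t` by countably many sets of finite
packing premeasure and applying Baire's theorem in `K_t`, the closure of one of them contains a
relatively open piece `K_t ∩ B(x, ε)`; since the premeasure does not grow under closure, that
piece has finite premeasure. But `x` lies in a cylinder `ψ_ω(K)` of diameter `< ε`, whose slice
is then contained in `K_t ∩ B(x, ε)` and has infinite premeasure by hypothesis.
-/

open MeasureTheory Metric Set
open scoped ENNReal

/-- The δ-approximate s-dimensional packing premeasure: the supremum of `∑ (diam Bᵢ)^s`
over finite disjoint collections of closed balls of diameter at most δ centred in `A`. -/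
noncomputable def prepack {X : Type*} [PseudoMetricSpace X] (s δ : ℝ) (A : Set X) : ℝ≥0∞ :=
  ⨆ (n : ℕ) (c : Fin n → X) (r : Fin n → ℝ)
    (_ : ∀ i, c i ∈ A ∧ 0 < r i ∧ 2 * r i ≤ δ)
    (_ : Pairwise fun i j => Disjoint (closedBall (c i) (r i)) (closedBall (c j) (r j))),
    ∑ i, ENNReal.ofReal ((2 * r i) ^ s)

/-- The s-dimensional packing premeasure `P^s(A) = lim_{δ → 0} P^s_δ(A)`. -/
noncomputable def packPre {X : Type*} [PseudoMetricSpace X] (s : ℝ) (A : Set X) : ℝ≥0∞ :=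
  ⨅ (δ : ℝ) (_ : 0 < δ), prepack s δ A

/-- The s-dimensional packing measure `𝒫^s(A) = inf { ∑ P^s(Aᵢ) : A ⊆ ⋃ Aᵢ }`. -/
noncomputable def packMeasure {X : Type*} [PseudoMetricSpace X] (s : ℝ) (A : Set X) : ℝ≥0∞ :=
  ⨅ (f : ℕ → Set X) (_ : A ⊆ ⋃ n, f n), ∑' n, packPre s (f n)

/-- The packing dimension. -/
noncomputable def packDim {X : Type*} [PseudoMetricSpace X] (A : Set X) : ℝ :=
  sInf {s : ℝ | 0 ≤ s ∧ packMeasure s A = 0}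

/-- The composition `ψ_{ω₁} ∘ ⋯ ∘ ψ_{ω_n}` associated to a finite word ω. -/
def wordMap {q : ℕ} {X : Type*} (ψ : Fin q → X → X) (ω : List (Fin q)) : X → X :=
  ω.foldr (fun j f => ψ j ∘ f) id

/-- The contraction ratio `ρ_{ω₁} ⋯ ρ_{ω_n}` associated to a finite word ω. -/
def wordRatio {q : ℕ} (ρ : Fin q → ℝ) (ω : List (Fin q)) : ℝ := (ω.map ρ).prod

open Filter
open scoped NNReal Topology

section Packing

variable {X : Type*} [PseudoMetricSpace X]

lemma prepack_mono (s δ : ℝ) {A B : Set X} (h : A ⊆ B) : prepack s δ A ≤ prepack s δ B :=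
  iSup_mono fun _ => iSup_mono fun _ => iSup_mono fun _ =>
    iSup_le fun hcr => le_iSup_of_le (fun i => ⟨h (hcr i).1, (hcr i).2⟩) le_rfl

lemma prepack_closure_le (s δ : ℝ) (A : Set X) : prepack s δ (closure A) ≤ prepack s δ A := by
  refine iSup_le fun n => iSup_le fun c => iSup_le fun r => iSup₂_le fun hcr hdisj => ?_
  -- Move each centre into `A` by less than `η` and shrink its ball by `η`, then let `η → 0+`.
  have hshrunk : ∀ η, 0 < η → (∀ i, η < r i) →
      ∑ i, ENNReal.ofReal ((2 * (r i - η)) ^ s) ≤ prepack s δ A := by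
    intro η hη hηr
    choose c' hc'A hcc' using fun i => Metric.mem_closure_iff.mp (hcr i).1 η hη
    have hball : ∀ i, closedBall (c' i) (r i - η) ⊆ closedBall (c i) (r i) := fun i =>
      closedBall_subset_closedBall' (by linarith [hcc' i, dist_comm (c i) (c' i)])
    refine le_iSup_of_le n <| le_iSup_of_le c' <| le_iSup_of_le (fun i => r i - η) <|
      le_iSup₂_of_le (fun i => ⟨hc'A i, sub_pos.mpr (hηr i), ?_⟩)
        (fun i j hij => (hdisj hij).mono (hball i) (hball j)) le_rfl
    linarith [(hcr i).2.2]
  have hcont : ContinuousAt (fun η : ℝ => ∑ i, ENNReal.ofReal ((2 * (r i - η)) ^ s)) 0 := by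
    refine tendsto_finsetSum _ fun i _ => ENNReal.continuous_ofReal.continuousAt.comp ?_
    exact ContinuousAt.rpow_const (by fun_prop) (Or.inl (by linarith [(hcr i).2.1]))
  have hsmall : ∀ᶠ η in 𝓝[>] (0 : ℝ), 0 < η ∧ ∀ i, η < r i :=
    eventually_mem_nhdsWithin.and <| nhdsWithin_le_nhds <|
      eventually_all.mpr fun i => eventually_lt_nhds (hcr i).2.1
  refine le_of_tendsto ?_ (hsmall.mono fun η hη => hshrunk η hη.1 hη.2)
  simpa using hcont.tendsto.mono_left nhdsWithin_le_nhds

lemma packPre_mono (s : ℝ) {A B : Set X} (h : A ⊆ B) : packPre s A ≤ packPre s B :=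
  iInf₂_mono fun δ _ => prepack_mono s δ h

lemma packPre_closure_le (s : ℝ) (A : Set X) : packPre s (closure A) ≤ packPre s A :=
  iInf₂_mono fun δ _ => prepack_closure_le s δ A

lemma exists_packPre_inter_ball_ne_top {s : ℝ} {A : Set X} (hA : IsComplete A)
    (hne : A.Nonempty) (hfin : packMeasure s A ≠ ∞) :
    ∃ x ∈ A, ∃ ε > 0, packPre s (A ∩ ball x ε) ≠ ∞ := by
  obtain ⟨f, hcover, hsum⟩ : ∃ f : ℕ → Set X, A ⊆ ⋃ n, f n ∧ ∑' n, packPre s (f n) < ∞ := by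
    simpa only [packMeasure, iInf_lt_iff, exists_prop] using lt_top_iff_ne_top.mpr hfin
  have := hA.completeSpace_coe
  have := hne.to_subtype
  have hunion : ⋃ n, ((↑) ⁻¹' closure (f n) : Set A) = univ :=
    eq_univ_of_forall fun x => mem_iUnion.mpr <|
      (mem_iUnion.mp (hcover x.2)).imp fun _ hx => subset_closure hx
  obtain ⟨n, x, hx⟩ := nonempty_interior_of_iUnion_of_closed
    (fun n => isClosed_closure.preimage continuous_subtype_val) hunion
  obtain ⟨ε, hε, hball⟩ := Metric.isOpen_iff.mp isOpen_interior x hx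
  have hsub : A ∩ ball (x : X) ε ⊆ closure (f n) := fun y ⟨hyA, hyx⟩ =>
    (interior_subset (hball (show (⟨y, hyA⟩ : A) ∈ ball x ε from hyx)) :
      (⟨y, hyA⟩ : A) ∈ (↑) ⁻¹' closure (f n))
  refine ⟨x, x.2, ε, hε, ne_top_of_le_ne_top (hsum.trans_le' (ENNReal.le_tsum n)).ne ?_⟩
  exact (packPre_mono s hsub).trans (packPre_closure_le s _)

end Packing

section Cylinders

variable {X : Type*} {q : ℕ} {ψ : Fin q → X → X}

@[simp]
lemma wordMap_nil : wordMap ψ [] = id := rfl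

@[simp]
lemma wordMap_cons (j : Fin q) (ω : List (Fin q)) : wordMap ψ (j :: ω) = ψ j ∘ wordMap ψ ω := rfl

lemma mapsTo_wordMap {K : Set X} (h : ∀ j, MapsTo (ψ j) K K) (ω : List (Fin q)) :
    MapsTo (wordMap ψ ω) K K := by
  induction ω with
  | nil => exact mapsTo_id K
  | cons j ω ih => exact (h j).comp ih

lemma lipschitzWith_wordMap [PseudoMetricSpace X] {r : ℝ≥0} (h : ∀ j, LipschitzWith r (ψ j))
    (ω : List (Fin q)) : LipschitzWith (r ^ ω.length) (wordMap ψ ω) := by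
  induction ω with
  | nil => simpa using LipschitzWith.id
  | cons j ω ih => simpa [pow_succ'] using (h j).comp ih

lemma exists_length_eq_mem_wordMap_image {K : Set X} (hK : K ⊆ ⋃ j, ψ j '' K) (m : ℕ) {x : X}
    (hx : x ∈ K) : ∃ ω : List (Fin q), ω.length = m ∧ x ∈ wordMap ψ ω '' K := by
  induction m generalizing x with
  | zero => exact ⟨[], rfl, x, hx, rfl⟩
  | succ m ih =>
    obtain ⟨j, y, hy, rfl⟩ := mem_iUnion.mp (hK hx)
    obtain ⟨ω, hlen, z, hz, rfl⟩ := ih hy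
    exact ⟨j :: ω, by simp [hlen], z, hz, rfl⟩

lemma exists_mem_wordMap_image_subset_ball [PseudoMetricSpace X] {r : ℝ≥0} (hr : r < 1)
    (hψ : ∀ j, LipschitzWith r (ψ j)) {K : Set X} (hKb : Bornology.IsBounded K)
    (hK : K ⊆ ⋃ j, ψ j '' K) {x : X} (hx : x ∈ K) {ε : ℝ} (hε : 0 < ε) :
    ∃ ω : List (Fin q), x ∈ wordMap ψ ω '' K ∧ wordMap ψ ω '' K ⊆ ball x ε := by
  have hdiam : Tendsto (fun m : ℕ => (r : ℝ) ^ m * diam K) atTop (𝓝 0) := by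
    simpa using (tendsto_pow_atTop_nhds_zero_of_lt_one r.2 hr).mul_const (diam K)
  obtain ⟨m, hm⟩ := (hdiam.eventually_lt_const hε).exists
  obtain ⟨ω, rfl, hxω⟩ := exists_length_eq_mem_wordMap_image hK m hx
  refine ⟨ω, hxω, ?_⟩
  rintro _ ⟨a, ha, rfl⟩
  obtain ⟨b, hb, rfl⟩ := hxω
  calc dist (wordMap ψ ω a) (wordMap ψ ω b) ≤ (r : ℝ) ^ ω.length * dist a b := by
        simpa using (lipschitzWith_wordMap hψ ω).dist_le_mul a b
    _ ≤ (r : ℝ) ^ ω.length * diam K := by gcongr; exact dist_le_diam_of_mem hKb ha hb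
    _ < ε := hm

end Cylinders

lemma exists_lipschitzWith_lt_one_of_smul_add {E : Type*} [SeminormedAddCommGroup E]
    [NormedSpace ℝ E] {q : ℕ} {ρ : Fin q → ℝ} (hρ : ∀ j, ρ j ∈ Ico (0 : ℝ) 1) {w : Fin q → E}
    {ψ : Fin q → E → E} (hψ : ∀ j x, ψ j x = ρ j • x + w j) :
    ∃ r : ℝ≥0, r < 1 ∧ ∀ j, LipschitzWith r (ψ j) := by
  refine ⟨Finset.univ.sup fun j => (ρ j).toNNReal,
    (Finset.sup_lt_iff zero_lt_one).mpr fun j _ => Real.toNNReal_lt_one.mpr (hρ j).2,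
    fun j => LipschitzWith.weaken ?_ (Finset.le_sup (Finset.mem_univ j))⟩
  refine LipschitzWith.of_dist_le_mul fun x y => le_of_eq ?_
  rw [hψ, hψ, dist_add_right, dist_smul₀, Real.norm_of_nonneg (hρ j).1,
    Real.coe_toNNReal _ (hρ j).1]

theorem packMeasure_slices_infinite_of_prepack_general (q : ℕ) (ρ : Fin q → ℝ) (w : Fin q → ℝ × ℝ)
    (hρ : ∀ j, ρ j ∈ Set.Ioo (0:ℝ) 1)
    (ψ : Fin q → (ℝ × ℝ) → (ℝ × ℝ)) (hψ : ∀ j x, ψ j x = ρ j • x + w j)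
    (K : Set (ℝ × ℝ)) (hKc : IsCompact K)
    (hinv : K = ⋃ j, ψ j '' K)
    (s : ℝ)
    (hyp : ∀ᵐ t ∂(volume.restrict (Prod.fst '' K)), ∀ ω : List (Fin q),
      ((wordMap ψ ω '' K) ∩ Prod.fst ⁻¹' {t}).Nonempty →
      packPre (s - 1) ((wordMap ψ ω '' K) ∩ Prod.fst ⁻¹' {t}) = ∞) :
    ∀ᵐ t ∂(volume.restrict (Prod.fst '' K)),
      packMeasure (s - 1) (K ∩ Prod.fst ⁻¹' {t}) = ∞ := by
  obtain ⟨r, hr, hψr⟩ :=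
    exists_lipschitzWith_lt_one_of_smul_add (fun j => Ioo_subset_Ico_self (hρ j)) hψ
  have hmaps : ∀ j, MapsTo (ψ j) K K := fun j =>
    mapsTo_iff_image_subset.mpr ((subset_iUnion (fun i => ψ i '' K) j).trans hinv.symm.subset)
  filter_upwards [hyp, ae_restrict_mem (hKc.image continuous_fst).measurableSet]
    with t hyp_t ⟨p, hpK, hpt⟩
  have hslice : IsCompact (K ∩ Prod.fst ⁻¹' {t}) :=
    hKc.inter_right (isClosed_singleton.preimage continuous_fst)
  by_contra hfin
  obtain ⟨x, ⟨hxK, hxt⟩, ε, hε, hball⟩ :=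
    exists_packPre_inter_ball_ne_top hslice.isComplete ⟨p, hpK, hpt⟩ hfin
  obtain ⟨ω, hxω, hω⟩ :=
    exists_mem_wordMap_image_subset_ball hr hψr hKc.isBounded hinv.subset hxK hε
  have hsub : wordMap ψ ω '' K ∩ Prod.fst ⁻¹' {t} ⊆ (K ∩ Prod.fst ⁻¹' {t}) ∩ ball x ε :=
    fun y ⟨hyω, hyt⟩ => ⟨⟨(mapsTo_wordMap hmaps ω).image_subset hyω, hyt⟩, hω hyω⟩
  exact hball (top_unique (hyp_t ω ⟨x, hxω, hxt⟩ ▸ packPre_mono (s - 1) hsub))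

/-- (Reduction from packing measure to packing premeasure for slices of a
rotation- and reflection-free self-similar set with strong separation.) If for a.e.
`t ∈ π(K)` every cylinder `ψ_ω(K)` meeting the fiber `π⁻¹{t}` has a slice of infinite
`(s-1)`-dimensional packing premeasure, then `𝒫^{s-1}(K_t) = ∞` for a.e. `t ∈ π(K)`. -/
theorem packMeasure_slices_infinite_of_prepack (q : ℕ) (ρ : Fin q → ℝ) (w : Fin q → ℝ × ℝ)
    (hρ : ∀ j, ρ j ∈ Set.Ioo (0:ℝ) 1)
    (ψ : Fin q → (ℝ × ℝ) → (ℝ × ℝ)) (hψ : ∀ j x, ψ j x = ρ j • x + w j)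
    (K : Set (ℝ × ℝ)) (hKc : IsCompact K) (hKne : K.Nonempty)
    (hinv : K = ⋃ j, ψ j '' K)
    (hsep : Pairwise fun i j => Disjoint (ψ i '' K) (ψ j '' K))
    (s : ℝ)
    (hyp : ∀ᵐ t ∂(volume.restrict (Prod.fst '' K)), ∀ ω : List (Fin q),
      ((wordMap ψ ω '' K) ∩ Prod.fst ⁻¹' {t}).Nonempty →
      packPre (s - 1) ((wordMap ψ ω '' K) ∩ Prod.fst ⁻¹' {t}) = ∞) :
    ∀ᵐ t ∂(volume.restrict (Prod.fst '' K)),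
      packMeasure (s - 1) (K ∩ Prod.fst ⁻¹' {t}) = ∞ :=
  packMeasure_slices_infinite_of_prepack_general q ρ w hρ ψ hψ K hKc hinv s hyp
end

section
/- Under the hypotheses of the previous statement, there exists N ∈ ℕ such that for all k ≥ 1, K_{l^{N+k−1}} ⊂ π⁻¹[0, ρ_l^{k−1} κ] ∩ K ⊂ K_{l^k}, i.e. the part of K in the left strip of width ρ_l^{k−1}κ is sandwiched between two iterates of the leftmost cylinder. -/
open MeasureTheory Metric Set
open scoped ENNReal

/-! The offset of `ψ_l` in the `π`-direction vanishes, since `ψ_l` maps `K` into itself and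
sends some point of `K` to the line `π = 0`, the left edge of `K`. Hence `π ∘ ψ_l^m = ρ_l^m π`,
so the cylinder `K_{l^m}` lies in a strip of width `ρ_l^m max π(K)`, which gives the left inclusion
once `ρ_l^N max π(K) ≤ κ`. Conversely, a point of `K` in the strip of width `ρ_l^k κ ≤ κ` lies in
`ψ_l(K)`, and its `ψ_l`-preimage lies in the strip of width `ρ_l^{k-1} κ`; induction on `k`. -/

theorem wordMap_replicate {q : ℕ} {X : Type*} (ψ : Fin q → X → X) (l : Fin q) (m : ℕ) :
    wordMap ψ (List.replicate m l) = (ψ l)^[m] := by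
  induction m with
  | zero => rfl
  | succ m ih =>
    rw [Function.iterate_succ', ← ih]
    rfl

theorem exists_pow_mul_le {c κ : ℝ} (hc0 : 0 ≤ c) (hc1 : c < 1) (hκ : 0 < κ) (M : ℝ) :
    ∃ N : ℕ, c ^ N * M ≤ κ := by
  have h : Filter.Tendsto (fun n : ℕ => c ^ n * M) Filter.atTop (nhds 0) := by
    simpa using (tendsto_pow_atTop_nhds_zero_of_lt_one hc0 hc1).mul_const M
  exact ((h.eventually (gt_mem_nhds hκ)).exists).imp fun _ => le_of_lt

section Strip

variable {X : Type*} {π : X → ℝ} {g : X → X} {K : Set X}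

theorem affine_offset_eq_zero_of_isLeast {a b : ℝ} (ha : 0 ≤ a)
    (hg : ∀ x, π (g x) = a * π x + b) (hmin : IsLeast (π '' K) 0) (hK : MapsTo g K K)
    (hzero : ∃ x ∈ K, π (g x) = 0) : b = 0 := by
  obtain ⟨z, hz, hz0⟩ := hmin.1
  obtain ⟨x, hx, hx0⟩ := hzero
  have hb : 0 ≤ b := by
    simpa [hg, hz0] using hmin.2 (mem_image_of_mem π (hK hz))
  have hx_nonneg : 0 ≤ π x := hmin.2 (mem_image_of_mem π hx)
  rw [hg] at hx0
  nlinarith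

variable {c : ℝ}

theorem apply_iterate_eq_pow_mul (hg : ∀ x, π (g x) = c * π x) (n : ℕ) (x : X) :
    π (g^[n] x) = c ^ n * π x := by
  have hsemiconj : Function.Semiconj π g (c * ·) := hg
  rw [hsemiconj.iterate_right n x, mul_left_iterate]

theorem iterate_image_subset_strip {M κ : ℝ} {N : ℕ} (hc : 0 ≤ c)
    (hg : ∀ x, π (g x) = c * π x) (hK : MapsTo g K K) (hM : K ⊆ π ⁻¹' Icc 0 M)
    (hN : c ^ N * M ≤ κ) (k : ℕ) :
    g^[N + k] '' K ⊆ π ⁻¹' Icc 0 (c ^ k * κ) ∩ K := by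
  rintro _ ⟨y, hy, rfl⟩
  obtain ⟨hy0, hyM⟩ := hM hy
  refine ⟨⟨?_, ?_⟩, hK.iterate _ hy⟩ <;> rw [apply_iterate_eq_pow_mul hg]
  · positivity
  · calc c ^ (N + k) * π y = c ^ k * (c ^ N * π y) := by ring
      _ ≤ c ^ k * κ := by gcongr; exact (by gcongr : c ^ N * π y ≤ c ^ N * M).trans hN

theorem strip_subset_iterate_image {κ : ℝ} (hc0 : 0 < c) (hc1 : c ≤ 1) (hκ : 0 ≤ κ)
    (hg : ∀ x, π (g x) = c * π x) (hbase : π ⁻¹' Icc 0 κ ∩ K ⊆ g '' K) (m : ℕ) :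
    π ⁻¹' Icc 0 (c ^ m * κ) ∩ K ⊆ g^[m + 1] '' K := by
  induction m with
  | zero => simpa using hbase
  | succ m ih =>
    rintro x ⟨⟨hx0, hxc⟩, hxK⟩
    have hxκ : π x ≤ κ := hxc.trans (mul_le_of_le_one_left hκ (pow_le_one₀ hc0.le hc1))
    obtain ⟨y, hyK, rfl⟩ := hbase ⟨⟨hx0, hxκ⟩, hxK⟩
    rw [hg] at hx0 hxc
    rw [pow_succ', mul_assoc] at hxc
    have hy : π y ∈ Icc 0 (c ^ m * κ) :=
      ⟨nonneg_of_mul_nonneg_right hx0 hc0, le_of_mul_le_mul_left hxc hc0⟩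
    rw [Function.iterate_succ', Set.image_comp]
    exact mem_image_of_mem g (ih ⟨hy, hyK⟩)

end Strip

theorem strip_sandwich_general (q : ℕ) (ρ : Fin q → ℝ) (w : Fin q → ℝ × ℝ)
    (hρ : ∀ j, ρ j ∈ Set.Ioo (0:ℝ) 1)
    (ψ : Fin q → (ℝ × ℝ) → (ℝ × ℝ)) (hψ : ∀ j x, ψ j x = ρ j • x + w j)
    (K : Set (ℝ × ℝ)) (hKc : IsCompact K)
    (hinv : K = ⋃ j, ψ j '' K)
    (hmin : IsLeast (Prod.fst '' K) 0)
    (l : Fin q) (κ : ℝ) (hκ : 0 < κ)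
    (hκl : ∀ j, ((ψ j '' K) ∩ Prod.fst ⁻¹' Set.Icc (0:ℝ) κ).Nonempty → j = l) :
    ∃ N : ℕ, ∀ k : ℕ, 1 ≤ k →
      wordMap ψ (List.replicate (N + k - 1) l) '' K ⊆
        Prod.fst ⁻¹' Set.Icc (0:ℝ) (ρ l ^ (k - 1) * κ) ∩ K ∧
      Prod.fst ⁻¹' Set.Icc (0:ℝ) (ρ l ^ (k - 1) * κ) ∩ K ⊆
        wordMap ψ (List.replicate k l) '' K := by
  obtain ⟨hρ0, hρ1⟩ := hρ l
  have hmaps : MapsTo (ψ l) K K :=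
    mapsTo_iff_image_subset.2 ((subset_iUnion (fun j => ψ j '' K) l).trans hinv.symm.subset)
  have hbase : Prod.fst ⁻¹' Icc 0 κ ∩ K ⊆ ψ l '' K := by
    rintro x ⟨hxκ, hxK⟩
    obtain ⟨j, hj⟩ := mem_iUnion.1 (hinv ▸ hxK)
    obtain rfl := hκl j ⟨x, hj, hxκ⟩
    exact hj
  have hfst : ∀ x, (ψ l x).1 = ρ l * x.1 := by
    have hoffset : (w l).1 = 0 := by
      refine affine_offset_eq_zero_of_isLeast hρ0.le (fun x => by simp [hψ]) hmin hmaps ?_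
      obtain ⟨z, hzK, hz0⟩ := hmin.1
      obtain ⟨x, hxK, rfl⟩ := hbase ⟨by simp [hz0, hκ.le], hzK⟩
      exact ⟨x, hxK, hz0⟩
    simp [hψ, hoffset]
  obtain ⟨M, hM⟩ := (hKc.image continuous_fst).bddAbove
  obtain ⟨N, hN⟩ := exists_pow_mul_le hρ0.le hρ1 hκ M
  refine ⟨N, fun k hk => ?_⟩
  obtain ⟨k, rfl⟩ := Nat.exists_eq_add_of_le' hk
  rw [Nat.add_sub_cancel, show N + (k + 1) - 1 = N + k by omega, wordMap_replicate,
    wordMap_replicate]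
  exact ⟨iterate_image_subset_strip hρ0.le hfst hmaps
      (fun x hx => ⟨hmin.2 (mem_image_of_mem _ hx), hM (mem_image_of_mem _ hx)⟩) hN k,
    strip_subset_iterate_image hρ0 hρ1.le hκ.le hfst hbase k⟩

/-- With `κ > 0` chosen so that `π⁻¹[0,κ]` meets only `ψ_l(K)` among the
first-generation sets, there exists `N` such that for all `k ≥ 1`
`K_{l^{N+k-1}} ⊆ π⁻¹[0, ρ_l^{k-1}κ] ∩ K ⊆ K_{l^k}`. -/
theorem strip_sandwich (q : ℕ) (ρ : Fin q → ℝ) (w : Fin q → ℝ × ℝ)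
    (hρ : ∀ j, ρ j ∈ Set.Ioo (0:ℝ) 1)
    (ψ : Fin q → (ℝ × ℝ) → (ℝ × ℝ)) (hψ : ∀ j x, ψ j x = ρ j • x + w j)
    (K : Set (ℝ × ℝ)) (hKc : IsCompact K) (hKne : K.Nonempty)
    (hinv : K = ⋃ j, ψ j '' K)
    (hsep : Pairwise fun i j => Disjoint (ψ i '' K) (ψ j '' K))
    (hmin : IsLeast (Prod.fst '' K) 0)
    (l : Fin q) (κ : ℝ) (hκ : 0 < κ)
    (hl : ((ψ l '' K) ∩ Prod.fst ⁻¹' {(0:ℝ)}).Nonempty)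
    (hκl : ∀ j, ((ψ j '' K) ∩ Prod.fst ⁻¹' Set.Icc (0:ℝ) κ).Nonempty → j = l) :
    ∃ N : ℕ, ∀ k : ℕ, 1 ≤ k →
      wordMap ψ (List.replicate (N + k - 1) l) '' K ⊆
        Prod.fst ⁻¹' Set.Icc (0:ℝ) (ρ l ^ (k - 1) * κ) ∩ K ∧
      Prod.fst ⁻¹' Set.Icc (0:ℝ) (ρ l ^ (k - 1) * κ) ∩ K ⊆
        wordMap ψ (List.replicate k l) '' K :=
  strip_sandwich_general q ρ w hρ ψ hψ K hKc hinv hmin l κ hκ hκl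
end

section
/- Let E ⊂ ℝ be a set of positive Lebesgue measure and η ∈ (0,1). Then for every sufficiently small ε > 0 there exists a subset E₀ ⊂ E of positive Lebesgue measure with the property: for every interval I of length ℓ(I) < ε intersecting E₀ and every compact F ⊂ I with ℋ¹(F) ≥ η·ℓ(I), one has ℋ¹(E ∩ F) ≥ η·ℓ(I)/2. -/
/-!
By the Lebesgue density theorem almost every point of `E` is a point of density `0` of `Eᶜ`.
Hence `E` is covered, up to a null set, by countably many measurable sets on which this density
is uniformly small, say at most `η / 8` in every ball of radius `< 1 / (n + 1)`; one of them
meets `E` in positive measure and gives `E₀`. An interval `I` of length `ℓ` through a point of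
`E₀` lies in a ball of radius `< 2ℓ` around it, so `ℋ¹(I \ E) ≤ η ℓ / 2`, and every `F ⊆ I` with
`ℋ¹(F) ≥ η ℓ` keeps at least `η ℓ / 2` of its measure inside `E`.
-/

open MeasureTheory Set Metric
open scoped ENNReal NNReal

theorem exists_measure_inter_pos_of_ae_exists_mem {α ι : Type*} [MeasurableSpace α] [Countable ι]
    {μ : Measure α} {s : Set α} {A : ι → Set α} (hs : 0 < μ s)
    (h : ∀ᵐ x ∂μ, x ∈ s → ∃ i, x ∈ A i) : ∃ i, 0 < μ (A i ∩ s) := by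
  by_contra! hnull
  refine hs.ne' (measure_eq_zero_iff_ae_notMem.2 ?_)
  have hA : ∀ i, ∀ᵐ x ∂μ, x ∉ A i ∩ s := fun i =>
    measure_eq_zero_iff_ae_notMem.1 (nonpos_iff_eq_zero.1 (hnull i))
  filter_upwards [h, ae_all_iff.2 hA] with x hx hnotMem hxs
  obtain ⟨i, hi⟩ := hx hxs
  exact hnotMem i ⟨hi, hxs⟩

section UniformDensity

variable {β : Type*} [MetricSpace β] [MeasurableSpace β] [BorelSpace β]
  [SecondCountableTopology β]

theorem measurable_measure_inter_closedBall (μ : Measure β) [SFinite μ] {s : Set β}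
    (hs : MeasurableSet s) (r : ℝ) : Measurable fun x => μ (s ∩ closedBall x r) :=
  measurable_measure_prodMk_left (ν := μ) <| (hs.preimage measurable_snd).inter <|
    measurableSet_le (continuous_snd.dist continuous_fst).measurable measurable_const

/-- Only rational radii are tested, so that this is a countable intersection of measurable sets. -/
def uniformDensityPoints (μ : Measure β) (s : Set β) (δ : ℝ≥0) (r : ℝ) : Set β :=
  {x | ∀ q : ℚ, 0 < q → (q : ℝ) < r → μ (sᶜ ∩ closedBall x q) ≤ δ * μ (closedBall x q)}

theorem measurableSet_uniformDensityPoints (μ : Measure β) [SFinite μ] {s : Set β}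
    (hs : MeasurableSet s) (δ : ℝ≥0) (r : ℝ) :
    MeasurableSet (uniformDensityPoints μ s δ r) := by
  simp only [uniformDensityPoints, ofPred_forall]
  refine .iInter fun q => .iInter fun _ => .iInter fun _ => measurableSet_le ?_ ?_
  · exact measurable_measure_inter_closedBall μ hs.compl _
  · simpa using (measurable_measure_inter_closedBall μ .univ (q : ℝ)).const_mul (δ : ℝ≥0∞)

theorem ae_exists_mem_uniformDensityPoints [HasBesicovitchCovering β] (μ : Measure β)
    [IsLocallyFiniteMeasure μ] {s : Set β} (hs : MeasurableSet s) {δ : ℝ≥0} (hδ : 0 < δ) :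
    ∀ᵐ x ∂μ, x ∈ s → ∃ n : ℕ, x ∈ uniformDensityPoints μ s δ (1 / (n + 1)) := by
  filter_upwards [Besicovitch.ae_tendsto_measure_inter_div_of_measurableSet μ hs.compl]
    with x hx hxs
  rw [indicator_of_notMem (notMem_compl_iff.2 hxs)] at hx
  obtain ⟨u, hu, hsmall⟩ := mem_nhdsGT_iff_exists_Ioo_subset.1 <|
    hx.eventually_lt_const (ENNReal.coe_pos.2 hδ)
  obtain ⟨n, hn⟩ := exists_nat_one_div_lt (mem_Ioi.1 hu)
  refine ⟨n, fun q hq hqn => ?_⟩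
  have hqu : (q : ℝ) ∈ Ioo 0 u := ⟨Rat.cast_pos.2 hq, hqn.trans hn⟩
  exact (ENNReal.div_le_iff_le_mul (.inr ENNReal.coe_ne_top) (.inr (by simpa using hδ.ne'))).1
    (hsmall hqu).le

theorem exists_subset_uniformDensityPoints [HasBesicovitchCovering β] (μ : Measure β)
    [IsLocallyFiniteMeasure μ] {s : Set β} (hs : MeasurableSet s) (hs0 : 0 < μ s) {δ : ℝ≥0}
    (hδ : 0 < δ) : ∃ r > 0, ∃ t ⊆ s, MeasurableSet t ∧ 0 < μ t ∧
      t ⊆ uniformDensityPoints μ s δ r := by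
  obtain ⟨n, hn⟩ :=
    exists_measure_inter_pos_of_ae_exists_mem hs0 (ae_exists_mem_uniformDensityPoints μ hs hδ)
  exact ⟨1 / (n + 1), by positivity, _, inter_subset_right,
    (measurableSet_uniformDensityPoints μ hs δ _).inter hs, hn, inter_subset_left⟩

end UniformDensity

theorem volume_Icc_sdiff_le_of_mem_uniformDensityPoints {E : Set ℝ} {δ : ℝ≥0} {r a b x : ℝ}
    (hx : x ∈ uniformDensityPoints volume E δ r) (hxI : x ∈ Icc a b) (hab : a < b)
    (hlen : b - a < r / 2) : volume (Icc a b \ E) ≤ ENNReal.ofReal (4 * δ * (b - a)) := by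
  obtain ⟨q, hq_gt, hq_lt⟩ := exists_rat_btwn (lt_min (by linarith : b - a < 2 * (b - a))
    (by linarith : b - a < r))
  have hq0 : (0 : ℝ) < q := (sub_pos.2 hab).trans hq_gt
  have hIball : Icc a b ⊆ closedBall x q := fun y hy =>
    (Real.dist_le_of_mem_Icc hy hxI).trans hq_gt.le
  calc volume (Icc a b \ E) ≤ volume (Eᶜ ∩ closedBall x q) := by
        rw [inter_comm]; exact measure_mono (sdiff_subset_sdiff_left hIball)
    _ ≤ δ * volume (closedBall x q) :=
        hx q (Rat.cast_pos.1 hq0) (hq_lt.trans_le (min_le_right _ _))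
    _ = ENNReal.ofReal (δ * (2 * q)) := by
        rw [Real.volume_closedBall, ← ENNReal.ofReal_coe_nnreal,
          ← ENNReal.ofReal_mul (by positivity)]
    _ ≤ ENNReal.ofReal (4 * δ * (b - a)) := by
        refine ENNReal.ofReal_le_ofReal ?_
        nlinarith [δ.2, min_le_left (2 * (b - a)) r]

theorem le_measure_inter_of_measure_sdiff_le {α : Type*} [MeasurableSpace α] {μ : Measure α}
    {E F : Set α} {a b : ℝ≥0∞} (hb : b ≠ ∞) (hF : a + b ≤ μ F) (hdiff : μ (F \ E) ≤ b) :
    a ≤ μ (E ∩ F) := by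
  refine (ENNReal.add_le_add_iff_right hb).1 (hF.trans ?_)
  calc μ F ≤ μ (F ∩ E) + μ (F \ E) := measure_le_inter_add_sdiff μ F E
    _ ≤ μ (E ∩ F) + b := by rw [inter_comm]; gcongr

/-- (Lebesgue density + Egoroff.) If `E ⊆ ℝ` has positive measure and
`η ∈ (0,1)`, then for all sufficiently small `ε > 0` there is a positive-measure subset
`E₀ ⊆ E` such that for every interval `I` of length `< ε` meeting `E₀` and every compact
`F ⊆ I` with `ℋ¹(F) ≥ η·ℓ(I)`, one has `ℋ¹(E ∩ F) ≥ η·ℓ(I)/2`. -/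
theorem density_subset (E : Set ℝ) (hE : MeasurableSet E) (hEpos : 0 < volume E)
    (η : ℝ) (hη : η ∈ Set.Ioo (0:ℝ) 1) :
    ∃ ε₀ > (0:ℝ), ∀ ε : ℝ, 0 < ε → ε ≤ ε₀ →
      ∃ E₀ : Set ℝ, E₀ ⊆ E ∧ MeasurableSet E₀ ∧ 0 < volume E₀ ∧
        ∀ a b : ℝ, a < b → b - a < ε → (Set.Icc a b ∩ E₀).Nonempty →
          ∀ F : Set ℝ, F ⊆ Set.Icc a b → IsCompact F →
            ENNReal.ofReal (η * (b - a)) ≤ volume F →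
            ENNReal.ofReal (η * (b - a) / 2) ≤ volume (E ∩ F) := by
  have hη0 : 0 < η := hη.1
  obtain ⟨δ, hδ⟩ : ∃ δ : ℝ≥0, (δ : ℝ) = η / 8 :=
    ⟨(η / 8).toNNReal, Real.coe_toNNReal _ (by positivity)⟩
  obtain ⟨r, hr, E₀, hE₀E, hE₀m, hE₀pos, hE₀⟩ := exists_subset_uniformDensityPoints volume hE
    hEpos (δ := δ) (NNReal.coe_pos.1 (by rw [hδ]; positivity))
  refine ⟨r / 2, half_pos hr, fun ε _ hεr => ⟨E₀, hE₀E, hE₀m, hE₀pos, ?_⟩⟩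
  rintro a b hab hlen ⟨x, hxI, hx⟩ F hFI - hF
  have hgap := volume_Icc_sdiff_le_of_mem_uniformDensityPoints (hE₀ hx) hxI hab
    (hlen.trans_le hεr)
  refine le_measure_inter_of_measure_sdiff_le (b := ENNReal.ofReal (η * (b - a) / 2))
    ENNReal.ofReal_ne_top ?_
    ((measure_mono (sdiff_subset_sdiff_left hFI)).trans (hgap.trans_eq ?_))
  · rwa [← ENNReal.ofReal_add (by positivity) (by positivity), add_halves]
  · rw [hδ]; ring_nf
end

section
/- Let K ⊂ ℝᵈ be a self-similar set satisfying the strong separation condition with Hausdorff dimension s, and let μ = ℋ^s|_K. If π : ℝᵈ → ℝ is a linear map with π_♯μ ≪ ℋ¹, then π_♯μ is in fact equivalent to ℋ¹|_{π(K)}: π_♯μ(A) > 0 for every A ⊂ π(K) with ℋ¹(A) > 0. -/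
/-!
Hutchinson's mass distribution argument gives `0 < ℋ^s(K)`: pushing the Bernoulli measure with
weights `ρ j ^ s` forward along a coding map puts mass at most `(diam E / ε) ^ s` on every set `E`,
where `ε` is the gap between the first-level pieces `ψ j '' K`.

If `A ⊆ π(K)` had positive length but `π_♯μ(A) = 0`, then, since the induced affine maps
`φ j t = ρ j * t + π (w j)` satisfy `π ∘ ψ j = φ j ∘ π` and pull `π_♯μ`-null sets back to null sets,
`A` would lie in a `π_♯μ`-null set `U` with `φ j ⁻¹' U ⊆ U`. Then `G = π(K) \ U` carries the full
mass `μ(K) > 0`, hence has positive length, and its affine copies under the compositions of the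
`φ j` avoid `A`. Such copies sit at arbitrarily small scales around every point of `A`, filling a
fixed proportion of a ball, which contradicts the Lebesgue density theorem at points of `A`.
-/

open MeasureTheory Set Filter Topology Function Metric
open scoped ENNReal NNReal Pointwise

lemma exists_pos_le_dist_of_pairwise_disjoint {ι β : Type*} [MetricSpace β] [Finite ι]
    {S : ι → Set β} (hS : ∀ j, IsCompact (S j)) (hd : Pairwise (Disjoint on S)) :
    ∃ ε > 0, ∀ i j, i ≠ j → ∀ x ∈ S i, ∀ y ∈ S j, ε ≤ dist x y := by
  have h : ∀ i j, ∀ᶠ ε in 𝓝 (0 : ℝ), i ≠ j → ∀ x ∈ S i, ∀ y ∈ S j, ε ≤ dist x y := by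
    intro i j
    by_cases hij : i = j
    · exact Eventually.of_forall fun _ h => absurd hij h
    obtain ⟨r, hr, hrd⟩ := Metric.exists_pos_forall_lt_edist (hS i) (hS j).isClosed (hd hij)
    filter_upwards [eventually_lt_nhds (NNReal.coe_pos.2 hr)] with ε hε _ x hx y hy
    have hrxy := hrd x hx y hy
    rw [edist_dist, ← ENNReal.ofReal_coe_nnreal, ENNReal.ofReal_lt_ofReal_iff'] at hrxy
    exact hε.le.trans hrxy.1.le
  obtain ⟨ε, hε, hε0⟩ := (((eventually_all.2 fun i => eventually_all.2 (h i)).filter_mono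
    nhdsWithin_le_nhds).and (self_mem_nhdsWithin (s := Ioi 0))).exists
  exact ⟨ε, hε0, hε⟩

lemma MeasureTheory.Measure.infinitePi_setOf_forall_lt_eq {ι : Type*} [MeasurableSpace ι]
    [MeasurableSingletonClass ι] (p : Measure ι) [IsProbabilityMeasure p] (σ : ℕ → ι) (n : ℕ) :
    Measure.infinitePi (fun _ : ℕ => p) {τ | ∀ i < n, τ i = σ i} =
      ∏ i ∈ Finset.range n, p {σ i} := by
  have : {τ : ℕ → ι | ∀ i < n, τ i = σ i} = (Finset.range n : Set ℕ).pi fun i => {σ i} := by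
    ext τ; simp
  rw [this, Measure.infinitePi_pi _ fun i _ => measurableSet_singleton _]

lemma ENNReal.le_rpow_of_forall_le_ofReal {a r : ℝ≥0∞} {s : ℝ} (hs : 0 < s)
    (h : ∀ t : ℝ, 0 < t → r ≤ ENNReal.ofReal t → a ≤ ENNReal.ofReal (t ^ s)) : a ≤ r ^ s := by
  rcases eq_top_or_lt_top r with rfl | hr
  · simp [ENNReal.top_rpow_of_pos hs]
  have htend : Tendsto (fun t : ℝ => ENNReal.ofReal (t ^ s)) (𝓝[>] r.toReal)
      (𝓝 (ENNReal.ofReal (r.toReal ^ s))) :=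
    ((ENNReal.continuous_ofReal.tendsto _).comp
      ((Real.continuousAt_rpow_const _ _ (Or.inr hs.le)).tendsto)).mono_left nhdsWithin_le_nhds
  rw [← ENNReal.ofReal_toReal hr.ne, ENNReal.ofReal_rpow_of_nonneg ENNReal.toReal_nonneg hs.le]
  refine ge_of_tendsto htend (eventually_nhdsWithin_of_forall fun t ht => h t
    (ENNReal.toReal_nonneg.trans_lt ht) ?_)
  exact (ENNReal.le_ofReal_iff_toReal_le hr.ne (ENNReal.toReal_nonneg.trans ht.out.le)).2 ht.out.le

lemma antilipschitzWith_of_dist_eq_mul {α β : Type*} [PseudoMetricSpace α] [PseudoMetricSpace β]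
    {f : α → β} {r : ℝ} (hr : 0 < r) (h : ∀ x y, dist (f x) (f y) = r * dist x y) :
    AntilipschitzWith (Real.toNNReal r)⁻¹ f :=
  .of_le_mul_dist fun x y => by
    rw [h, NNReal.coe_inv, Real.coe_toNNReal _ hr.le, inv_mul_cancel_left₀ hr.ne']

lemma AntilipschitzWith.quasiMeasurePreserving_hausdorffMeasure_restrict {X Y : Type*}
    [EMetricSpace X] [MeasurableSpace X] [BorelSpace X] [EMetricSpace Y] [MeasurableSpace Y]
    [BorelSpace Y] {f : X → Y} {C : ℝ≥0} (hf : AntilipschitzWith C f) (hfm : Measurable f)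
    {K : Set X} {L : Set Y} (hKL : MapsTo f K L) {d : ℝ} (hd : 0 ≤ d) :
    Measure.QuasiMeasurePreserving f (μH[d].restrict K) (μH[d].restrict L) := by
  refine ⟨hfm, Measure.AbsolutelyContinuous.mk fun T hT hT0 => ?_⟩
  rw [Measure.restrict_apply hT] at hT0
  rw [Measure.map_apply hfm hT, Measure.restrict_apply (hfm hT), ← nonpos_iff_eq_zero]
  calc μH[d] (f ⁻¹' T ∩ K) ≤ C ^ d * μH[d] (f '' (f ⁻¹' T ∩ K)) := hf.le_hausdorffMeasure_image hd _
    _ ≤ C ^ d * μH[d] (T ∩ L) := by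
        gcongr
        rintro _ ⟨x, ⟨hxT, hxK⟩, rfl⟩
        exact ⟨hxT, hKL hxK⟩
    _ = 0 := by rw [hT0, mul_zero]

lemma Function.Semiconj.quasiMeasurePreserving_map {X Y : Type*} [MeasurableSpace X]
    [MeasurableSpace Y] {μ : Measure X} {π : X → Y} {f : X → X} {g : Y → Y} (h : Semiconj π f g)
    (hπ : Measurable π) (hf : Measure.QuasiMeasurePreserving f μ μ) (hg : Measurable g) :
    Measure.QuasiMeasurePreserving g (μ.map π) (μ.map π) :=
  ⟨hg, by
    rw [Measure.map_map hg hπ, ← h.comp_eq, ← Measure.map_map hπ hf.measurable]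
    exact hf.absolutelyContinuous.map hπ⟩

lemma exists_null_superset_forall_mapsTo_compl {α ι : Type*} [MeasurableSpace α] [Countable ι]
    {ν : Measure α} {f : ι → α → α} (hf : ∀ j, Measure.QuasiMeasurePreserving (f j) ν ν)
    {A : Set α} (hA : ν A = 0) : ∃ U, A ⊆ U ∧ ν U = 0 ∧ ∀ j, MapsTo (f j) Uᶜ Uᶜ := by
  let B : ℕ → Set α := fun n => Nat.rec A (fun _ Bn => Bn ∪ ⋃ j, f j ⁻¹' Bn) n
  have hB : ∀ n, ν (B n) = 0 := by
    intro n
    induction n with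
    | zero => exact hA
    | succ n ih =>
      exact measure_union_null ih (measure_iUnion_null fun j => (hf j).preimage_null ih)
  refine ⟨⋃ n, B n, subset_iUnion B 0, measure_iUnion_null hB, fun j x hx hfx => hx ?_⟩
  obtain ⟨n, hn⟩ := mem_iUnion.1 hfx
  exact mem_iUnion.2 ⟨n + 1, Or.inr (mem_iUnion.2 ⟨j, hn⟩)⟩

lemma Real.volume_image_mul_add (a c : ℝ) (s : Set ℝ) :
    volume ((fun t => a * t + c) '' s) = ENNReal.ofReal |a| * volume s := by
  have : (fun t => a * t + c) '' s = (fun t => t + c) '' (a • s) := by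
    rw [← image_smul, image_image]; rfl
  rw [this, image_add_right, measure_preimage_add_right, Measure.addHaar_smul]
  simp

lemma Real.volume_inter_closedBall_add_le {A G : Set ℝ} (hA : MeasurableSet A) {a c u D : ℝ}
    (ha : 0 < a) (hGu : ∀ ζ ∈ G, dist ζ u ≤ D) (hdisj : ∀ ζ ∈ G, a * ζ + c ∉ A) :
    volume (A ∩ closedBall (a * u + c) (a * D)) + ENNReal.ofReal a * volume G ≤
      ENNReal.ofReal a * ENNReal.ofReal (2 * D) := by
  have himg : (fun t => a * t + c) '' G ⊆ closedBall (a * u + c) (a * D) \ A := by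
    rintro _ ⟨ζ, hζ, rfl⟩
    refine ⟨?_, hdisj ζ hζ⟩
    rw [mem_closedBall, Real.dist_eq, show a * ζ + c - (a * u + c) = a * (ζ - u) by ring,
      abs_mul, abs_of_pos ha, ← Real.dist_eq]
    exact mul_le_mul_of_nonneg_left (hGu ζ hζ) ha.le
  calc volume (A ∩ closedBall (a * u + c) (a * D)) + ENNReal.ofReal a * volume G
      = volume ((A ∩ closedBall (a * u + c) (a * D)) ∪ (fun t => a * t + c) '' G) := by
        rw [measure_union' (disjoint_left.2 fun t ht hti => (himg hti).2 ht.1)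
          (hA.inter measurableSet_closedBall), Real.volume_image_mul_add, abs_of_pos ha]
    _ ≤ volume (closedBall (a * u + c) (a * D)) :=
        measure_mono (union_subset inter_subset_right (himg.trans sdiff_subset))
    _ = ENNReal.ofReal a * ENNReal.ofReal (2 * D) := by
        rw [Real.volume_closedBall, ← ENNReal.ofReal_mul ha.le, mul_left_comm]

theorem Real.volume_eq_zero_of_forall_disjoint_affine_copy {A C G : Set ℝ} (hA : MeasurableSet A)
    (hC : Bornology.IsBounded C) (hGC : G ⊆ C) (hG : volume G ≠ 0)
    (h : ∀ y ∈ A, ∀ ε > 0, ∃ a ∈ Ioo 0 ε, ∃ c, ∃ u ∈ C, y = a * u + c ∧ ∀ ζ ∈ G, a * ζ + c ∉ A) :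
    volume A = 0 := by
  by_contra hA0
  have : (ae (volume.restrict A)).NeBot := ae_neBot.2 (by simpa using hA0)
  obtain ⟨y, hy, hyA⟩ :=
    ((Besicovitch.ae_tendsto_measure_inter_div volume A).and (ae_restrict_mem hA)).exists
  obtain ⟨D, hD0, hD⟩ : ∃ D > 0, ∀ x ∈ C, ∀ y ∈ C, dist x y ≤ D := by
    obtain ⟨D, hD⟩ := Metric.isBounded_iff.1 hC
    exact ⟨max D 1, by positivity, fun x hx y hy => (hD hx hy).trans (le_max_left _ _)⟩
  set M := ENNReal.ofReal (2 * D)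
  have hM0 : M ≠ 0 := by simp [M, hD0]
  have hβ : (M - volume G) / M < 1 := by
    rw [ENNReal.div_lt_iff (.inl hM0) (.inl ENNReal.ofReal_ne_top), one_mul]
    exact ENNReal.sub_lt_self ENNReal.ofReal_ne_top hM0 hG
  obtain ⟨ε, hε, hεβ⟩ := (nhdsGT_basis 0).eventually_iff.1 (hy.eventually (lt_mem_nhds hβ))
  obtain ⟨a, ⟨ha0, haε⟩, c, u, huC, rfl, hdisj⟩ := h y hyA (ε / D) (div_pos hε hD0)
  have hbound := volume_inter_closedBall_add_le hA ha0 (fun ζ hζ => hD ζ (hGC hζ) u huC) hdisj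
  have hGfin : ENNReal.ofReal a * volume G ≠ ⊤ :=
    ENNReal.mul_ne_top ENNReal.ofReal_ne_top ((hC.subset hGC).measure_lt_top).ne
  refine (hεβ ⟨mul_pos ha0 hD0, (lt_div_iff₀ hD0).1 haε⟩).not_ge ?_
  calc volume (A ∩ closedBall (a * u + c) (a * D)) / volume (closedBall (a * u + c) (a * D))
      = volume (A ∩ closedBall (a * u + c) (a * D)) / (ENNReal.ofReal a * M) := by
        rw [Real.volume_closedBall, ← ENNReal.ofReal_mul ha0.le, mul_left_comm]
    _ ≤ ENNReal.ofReal a * (M - volume G) / (ENNReal.ofReal a * M) := by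
        rw [ENNReal.mul_sub fun _ _ => ENNReal.ofReal_ne_top]
        gcongr
        exact ENNReal.le_sub_of_add_le_right hGfin hbound
    _ = (M - volume G) / M :=
        ENNReal.mul_div_mul_left _ _ (by simpa using ha0) ENNReal.ofReal_ne_top

namespace IFS

variable {ι α : Type*}

def iter (ψ : ι → α → α) (σ : ℕ → ι) : ℕ → α → α
  | 0 => id
  | n + 1 => iter ψ σ n ∘ ψ (σ n)

def ratio (ρ : ι → ℝ) (σ : ℕ → ι) (n : ℕ) : ℝ := ∏ i ∈ Finset.range n, ρ (σ i)

variable {ψ : ι → α → α} {ρ : ι → ℝ}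

@[simp] lemma iter_zero (ψ : ι → α → α) (σ : ℕ → ι) : iter ψ σ 0 = id := rfl

lemma iter_succ (ψ : ι → α → α) (σ : ℕ → ι) (n : ℕ) :
    iter ψ σ (n + 1) = iter ψ σ n ∘ ψ (σ n) := rfl

lemma ratio_succ (ρ : ι → ℝ) (σ : ℕ → ι) (n : ℕ) :
    ratio ρ σ (n + 1) = ratio ρ σ n * ρ (σ n) :=
  Finset.prod_range_succ _ _

lemma ratio_pos (hρ : ∀ j, 0 < ρ j) (σ : ℕ → ι) (n : ℕ) : 0 < ratio ρ σ n :=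
  Finset.prod_pos fun i _ => hρ (σ i)

lemma tendsto_ratio [Finite ι] (hρ : ∀ j, ρ j ∈ Ioo 0 1) (σ : ℕ → ι) :
    Tendsto (ratio ρ σ) atTop (𝓝 0) := by
  have : Nonempty ι := ⟨σ 0⟩
  obtain ⟨j₀, hj₀⟩ := Finite.exists_max ρ
  have hle : ∀ n, ratio ρ σ n ≤ ρ j₀ ^ n := fun n => calc
    ratio ρ σ n ≤ ∏ _ ∈ Finset.range n, ρ j₀ :=
      Finset.prod_le_prod (fun i _ => (hρ _).1.le) fun i _ => hj₀ _
    _ = ρ j₀ ^ n := by simp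
  exact squeeze_zero (fun n => (ratio_pos (fun j => (hρ j).1) σ n).le) hle
    (tendsto_pow_atTop_nhds_zero_of_lt_one (hρ j₀).1.le (hρ j₀).2)

lemma iter_congr {σ τ : ℕ → ι} {n : ℕ} (h : ∀ i < n, σ i = τ i) :
    iter ψ σ n = iter ψ τ n := by
  induction n with
  | zero => rfl
  | succ n ih =>
    rw [iter_succ, iter_succ, ih fun i hi => h i (by omega), h n (by omega)]

lemma mapsTo_iter {s : Set α} (h : ∀ j, MapsTo (ψ j) s s) (σ : ℕ → ι) (n : ℕ) :
    MapsTo (iter ψ σ n) s s := by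
  induction n with
  | zero => exact mapsTo_id s
  | succ n ih => exact ih.comp (h (σ n))

lemma semiconj_iter {β : Type*} {π : α → β} {φ : ι → β → β} (h : ∀ j, Semiconj π (ψ j) (φ j))
    (σ : ℕ → ι) (n : ℕ) : Semiconj π (iter ψ σ n) (iter φ σ n) := by
  induction n with
  | zero => exact Semiconj.id_right
  | succ n ih => exact ih.comp_right (h (σ n))

lemma iter_eq_smul_add {E : Type*} [AddCommGroup E] [Module ℝ E] {ψ : ι → E → E} {w : ι → E}
    (h : ∀ j x, ψ j x = ρ j • x + w j) (σ : ℕ → ι) (n : ℕ) (x : E) :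
    iter ψ σ n x = ratio ρ σ n • x + iter ψ σ n 0 := by
  induction n generalizing x with
  | zero => simp [ratio]
  | succ n ih =>
    simp only [iter_succ, comp_apply, h, ih (ρ (σ n) • x + w (σ n)), ih (w (σ n)), ratio_succ,
      smul_zero, zero_add, smul_add, mul_smul]
    abel

lemma exists_forall_mem_image_iter {s : Set α} (h : s ⊆ ⋃ j, ψ j '' s) {x : α} (hx : x ∈ s) :
    ∃ σ : ℕ → ι, ∀ n, x ∈ iter ψ σ n '' s := by
  have hpre : ∀ y : s, ∃ p : ι × s, ψ p.1 p.2 = y := fun y => by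
    obtain ⟨j, z, hz, hzy⟩ := mem_iUnion.1 (h y.2)
    exact ⟨(j, ⟨z, hz⟩), hzy⟩
  choose pre hpre using hpre
  let orbit : ℕ → s := fun n => (fun y => (pre y).2)^[n] ⟨x, hx⟩
  refine ⟨fun n => (pre (orbit n)).1, fun n => ⟨orbit n, (orbit n).2, ?_⟩⟩
  induction n with
  | zero => rfl
  | succ n ih =>
    rw [iter_succ, comp_apply, ← ih, ← hpre (orbit n)]
    simp only [orbit, iterate_succ_apply']

lemma exists_small_affine_copy [Finite ι] {π : α → ℝ} {b : ι → ℝ} (hρ : ∀ j, ρ j ∈ Ioo 0 1)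
    (hsemi : ∀ j, Semiconj π (ψ j) fun t => ρ j * t + b j) {K : Set α}
    (hK : K ⊆ ⋃ j, ψ j '' K) {V : Set ℝ} (hV : ∀ j, MapsTo (fun t => ρ j * t + b j) V V)
    {x : α} (hx : x ∈ K) {ε : ℝ} (hε : 0 < ε) :
    ∃ a ∈ Ioo 0 ε, ∃ c, ∃ u ∈ π '' K, π x = a * u + c ∧ MapsTo (fun t => a * t + c) V V := by
  obtain ⟨σ, hσ⟩ := exists_forall_mem_image_iter hK hx
  obtain ⟨n, hn⟩ := ((tendsto_ratio hρ σ).eventually (gt_mem_nhds hε)).exists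
  obtain ⟨v, hvK, rfl⟩ := hσ n
  set φ : ι → ℝ → ℝ := fun j t => ρ j * t + b j
  have hiter : ∀ t, iter φ σ n t = ratio ρ σ n * t + iter φ σ n 0 :=
    iter_eq_smul_add (fun j t => rfl) σ n
  refine ⟨ratio ρ σ n, ⟨ratio_pos (fun j => (hρ j).1) σ n, hn⟩, iter φ σ n 0, π v,
    mem_image_of_mem π hvK, by rw [(semiconj_iter hsemi σ n).eq, hiter], ?_⟩
  exact (mapsTo_iter hV σ n).congr fun t _ => hiter t

section Topology

variable [TopologicalSpace α]

lemma continuous_iter (h : ∀ j, Continuous (ψ j)) (σ : ℕ → ι) (n : ℕ) :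
    Continuous (iter ψ σ n) := by
  induction n with
  | zero => exact continuous_id
  | succ n ih => exact ih.comp (h (σ n))

lemma nonempty_iInter_image_iter [T2Space α] {K : Set α} (hK : IsCompact K) (hKne : K.Nonempty)
    (hc : ∀ j, Continuous (ψ j)) (hKψ : ∀ j, MapsTo (ψ j) K K) (σ : ℕ → ι) :
    (⋂ n, iter ψ σ n '' K).Nonempty := by
  refine IsCompact.nonempty_iInter_of_sequence_nonempty_isCompact_isClosed _ (fun n => ?_)
    (fun n => hKne.image _) (by simpa using hK)
    (fun n => (hK.image (continuous_iter hc σ n)).isClosed)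
  rw [iter_succ, image_comp]
  exact image_mono (hKψ _).image_subset

end Topology

section Metric

variable [PseudoMetricSpace α]

lemma dist_iter (h : ∀ j x y, dist (ψ j x) (ψ j y) = ρ j * dist x y) (σ : ℕ → ι) (n : ℕ)
    (x y : α) : dist (iter ψ σ n x) (iter ψ σ n y) = ratio ρ σ n * dist x y := by
  induction n generalizing x y with
  | zero => simp [ratio]
  | succ n ih => rw [iter_succ, comp_apply, comp_apply, ih, h, ratio_succ, mul_assoc]

variable {K : Set α}

lemma ratio_mul_le_dist_of_ne (hρ : ∀ j, 0 ≤ ρ j)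
    (hsim : ∀ j x y, dist (ψ j x) (ψ j y) = ρ j * dist x y) {ε : ℝ}
    (hε : ∀ i j, i ≠ j → ∀ x ∈ ψ i '' K, ∀ y ∈ ψ j '' K, ε ≤ dist x y)
    {σ τ : ℕ → ι} {m : ℕ} (hagree : ∀ i < m, σ i = τ i) (hne : σ m ≠ τ m) {x y : α}
    (hx : x ∈ iter ψ σ (m + 1) '' K) (hy : y ∈ iter ψ τ (m + 1) '' K) :
    ratio ρ σ m * ε ≤ dist x y := by
  rw [iter_succ, image_comp] at hx hy
  rw [← iter_congr hagree] at hy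
  obtain ⟨a, ha, rfl⟩ := hx
  obtain ⟨b, hb, rfl⟩ := hy
  rw [dist_iter hsim]
  exact mul_le_mul_of_nonneg_left (hε _ _ hne a ha b hb) (Finset.prod_nonneg fun i _ => hρ _)

lemma exists_preimage_subset_cylinder [Finite ι] (hρ : ∀ j, ρ j ∈ Ioo 0 1)
    (hsim : ∀ j x y, dist (ψ j x) (ψ j y) = ρ j * dist x y) {ε : ℝ} (hε0 : 0 < ε)
    (hε : ∀ i j, i ≠ j → ∀ x ∈ ψ i '' K, ∀ y ∈ ψ j '' K, ε ≤ dist x y)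
    {code : (ℕ → ι) → α} (hcode : ∀ σ, code σ ∈ ⋂ n, iter ψ σ n '' K) {E : Set α} {θ : ℝ}
    (hθ : 0 < θ) (hE : ∀ x ∈ E, ∀ y ∈ E, dist x y ≤ θ * ε) {σ : ℕ → ι} (hσ : code σ ∈ E) :
    ∃ N, ratio ρ σ N ≤ θ ∧ code ⁻¹' E ⊆ {τ | ∀ i < N, τ i = σ i} := by
  classical
  have hN : ∃ N, ratio ρ σ N ≤ θ := ((tendsto_ratio hρ σ).eventually (ge_mem_nhds hθ)).exists
  refine ⟨Nat.find hN, Nat.find_spec hN, fun τ hτ => ?_⟩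
  -- `τ` splits from `σ` while `σ` is still above scale `θ`, so their points are `> θ * ε` apart.
  by_contra hcyl
  obtain ⟨i, hi, hτi⟩ : ∃ i < Nat.find hN, τ i ≠ σ i := by simpa using hcyl
  have hdiff : ∃ m, σ m ≠ τ m := ⟨i, Ne.symm hτi⟩
  have hmN : Nat.find hdiff < Nat.find hN := (Nat.find_min' hdiff (Ne.symm hτi)).trans_lt hi
  have hfar := ratio_mul_le_dist_of_ne (fun j => (hρ j).1.le) hsim hε
    (fun i hi => not_not.1 (Nat.find_min hdiff hi)) (Nat.find_spec hdiff)
    (mem_iInter.1 (hcode σ) _) (mem_iInter.1 (hcode τ) _)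
  have hθm : θ < ratio ρ σ (Nat.find hdiff) := not_le.1 (Nat.find_min hN hmN)
  nlinarith [hE _ hσ _ hτ]

end Metric

theorem hausdorffMeasure_pos_of_pairwise_disjoint {X : Type*} [MetricSpace X] [MeasurableSpace X]
    [BorelSpace X] [Fintype ι] {ψ : ι → X → X} (hρ : ∀ j, ρ j ∈ Ioo 0 1)
    (hsim : ∀ j x y, dist (ψ j x) (ψ j y) = ρ j * dist x y) {K : Set X} (hK : IsCompact K)
    (hKne : K.Nonempty) (hKψ : ∀ j, MapsTo (ψ j) K K)
    (hsep : Pairwise (Disjoint on fun j => ψ j '' K)) {s : ℝ} (hs : 0 < s)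
    (hdim : ∑ j, ρ j ^ s = 1) : 0 < μH[s] K := by
  have hcont : ∀ j, Continuous (ψ j) := fun j =>
    (LipschitzWith.of_dist_le' fun x y => (hsim j x y).le).continuous
  obtain ⟨ε, hε0, hε⟩ := exists_pos_le_dist_of_pairwise_disjoint (fun j => hK.image (hcont j)) hsep
  choose code hcode using fun σ => nonempty_iInter_image_iter hK hKne hcont hKψ σ
  let _ : MeasurableSpace ι := ⊤
  let p : PMF ι := PMF.ofFintype (fun j => ENNReal.ofReal (ρ j ^ s)) (by
    rw [← ENNReal.ofReal_sum_of_nonneg fun j _ => Real.rpow_nonneg (hρ j).1.le s, hdim,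
      ENNReal.ofReal_one])
  let P := Measure.infinitePi fun _ : ℕ => p.toMeasure
  have hcyl : ∀ σ N, P {τ | ∀ i < N, τ i = σ i} = ENNReal.ofReal (ratio ρ σ N ^ s) := by
    intro σ N
    rw [Measure.infinitePi_setOf_forall_lt_eq, ratio,
      ← Real.finsetProd_rpow _ _ fun i _ => (hρ _).1.le,
      ENNReal.ofReal_prod_of_nonneg fun i _ => Real.rpow_nonneg (hρ _).1.le s]
    refine Finset.prod_congr rfl fun i _ => ?_
    rw [PMF.toMeasure_apply_singleton _ _ (measurableSet_singleton _), PMF.ofFintype_apply]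
  have hmass : ∀ E : Set X, ENNReal.ofReal (ε ^ s) * P (code ⁻¹' E) ≤ Metric.ediam E ^ s := by
    intro E
    refine ENNReal.le_rpow_of_forall_le_ofReal hs fun t ht hEt => ?_
    rcases (code ⁻¹' E).eq_empty_or_nonempty with hempty | ⟨σ, hσ⟩
    · simp [hempty]
    have hE : ∀ x ∈ E, ∀ y ∈ E, dist x y ≤ t / ε * ε := fun x hx y hy => by
      rw [div_mul_cancel₀ _ hε0.ne', ← edist_le_ofReal ht.le]
      exact (Metric.edist_le_ediam_of_mem hx hy).trans hEt
    obtain ⟨N, hN, hsub⟩ := exists_preimage_subset_cylinder hρ hsim hε0 hε hcode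
      (div_pos ht hε0) hE hσ
    calc ENNReal.ofReal (ε ^ s) * P (code ⁻¹' E)
        ≤ ENNReal.ofReal (ε ^ s) * ENNReal.ofReal ((t / ε) ^ s) := by
          gcongr
          refine (measure_mono hsub).trans ?_
          rw [hcyl]
          exact ENNReal.ofReal_le_ofReal
            (Real.rpow_le_rpow (ratio_pos (fun j => (hρ j).1) σ N).le hN hs.le)
      _ = ENNReal.ofReal (t ^ s) := by
          rw [← ENNReal.ofReal_mul (by positivity), ← Real.mul_rpow hε0.le (by positivity),
            mul_div_cancel₀ _ hε0.ne']
  have hle : ENNReal.ofReal (ε ^ s) • OuterMeasure.map code P.toOuterMeasure ≤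
      (μH[s] : Measure X).toOuterMeasure := by
    rw [Measure.hausdorffMeasure, Measure.mkMetric_toOuterMeasure]
    exact OuterMeasure.le_mkMetric _ _ 1 one_pos fun E _ => hmass E
  have hK' : code ⁻¹' K = univ :=
    eq_univ_of_forall fun σ => by simpa using mem_iInter.1 (hcode σ) 0
  calc 0 < ENNReal.ofReal (ε ^ s) * P (code ⁻¹' K) := by
        rw [hK', measure_univ, mul_one]; positivity
    _ ≤ μH[s] K := hle K

end IFS

/-- (Peres–Schlag–Solomyak.) For a self-similar set `K ⊂ ℝᵈ` with strong
separation and `dim K = s`, if a linear projection of `μ = ℋ^s|_K` is absolutely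
continuous with respect to `ℋ¹`, then it is in fact equivalent to `ℋ¹|_{π(K)}`: every
subset of `π(K)` of positive length has positive projected measure. -/
theorem projection_equivalent (d q : ℕ) (ρ : Fin q → ℝ)
    (w : Fin q → EuclideanSpace ℝ (Fin d))
    (hρ : ∀ j, ρ j ∈ Set.Ioo (0:ℝ) 1)
    (ψ : Fin q → EuclideanSpace ℝ (Fin d) → EuclideanSpace ℝ (Fin d))
    (hψ : ∀ j x, ψ j x = ρ j • x + w j)
    (K : Set (EuclideanSpace ℝ (Fin d))) (hKc : IsCompact K) (hKne : K.Nonempty)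
    (hinv : K = ⋃ j, ψ j '' K)
    (hsep : Pairwise fun i j => Disjoint (ψ i '' K) (ψ j '' K))
    (s : ℝ) (hs : 0 < s) (hdim : ∑ j, ρ j ^ s = 1)
    (π : EuclideanSpace ℝ (Fin d) →L[ℝ] ℝ)
    (hA : (((μH[s]).restrict K).map π) ≪ volume) :
    ∀ A : Set ℝ, A ⊆ π '' K → MeasurableSet A → 0 < volume A →
      0 < (((μH[s]).restrict K).map π) A := by
  intro A hAK hAm hA0
  have hsim : ∀ j x y, dist (ψ j x) (ψ j y) = ρ j * dist x y := fun j x y => by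
    rw [hψ, hψ, dist_add_right, dist_smul₀, Real.norm_of_nonneg (hρ j).1.le]
  have hψK : ∀ j, MapsTo (ψ j) K K := fun j x hx => by
    rw [hinv]
    exact mem_iUnion.2 ⟨j, x, hx, rfl⟩
  set ν := ((μH[s]).restrict K).map π
  set φ : Fin q → ℝ → ℝ := fun j t => ρ j * t + π (w j)
  have hsemi : ∀ j, Semiconj π (ψ j) (φ j) := fun j x => by simp [φ, hψ]
  have hφν : ∀ j, Measure.QuasiMeasurePreserving (φ j) ν ν := fun j => by
    have hanti := antilipschitzWith_of_dist_eq_mul (hρ j).1 (hsim j)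
    have hcont := (LipschitzWith.of_dist_le' fun x y => (hsim j x y).le).continuous
    exact (hsemi j).quasiMeasurePreserving_map π.continuous.measurable
      (hanti.quasiMeasurePreserving_hausdorffMeasure_restrict hcont.measurable (hψK j) hs.le)
      (by fun_prop)
  by_contra hνA
  obtain ⟨U, hAU, hU0, hUφ⟩ :=
    exists_null_superset_forall_mapsTo_compl hφν (nonpos_iff_eq_zero.1 (not_lt.1 hνA))
  have hπK : IsCompact (π '' K) := hKc.image π.continuous
  refine hA0.ne' (Real.volume_eq_zero_of_forall_disjoint_affine_copy (G := π '' K \ U) hAm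
    hπK.isBounded sdiff_subset (fun hG => ?_) ?_)
  · refine (IFS.hausdorffMeasure_pos_of_pairwise_disjoint hρ hsim hKc hKne hψK hsep hs hdim).ne' ?_
    rw [← hA hG, measure_sdiff_null hU0, Measure.map_apply π.continuous.measurable
      hπK.isClosed.measurableSet, Measure.restrict_apply' hKc.isClosed.measurableSet,
      inter_eq_right.2 (subset_preimage_image π K)]
  · rintro _ hy ε hε
    obtain ⟨x, hxK, rfl⟩ := hAK hy
    obtain ⟨a, ha, c, u, hu, hxu, hV⟩ :=
      IFS.exists_small_affine_copy hρ hsemi hinv.subset hUφ hxK hε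
    exact ⟨a, ha, c, u, hu, hxu, fun ζ hζ hζA => hV hζ.2 (hAU hζA)⟩
end
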